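/- arXiv:1308.4595 — 4 statements merged into one kernel-verified Lean document; each statement's English description precedes it below -/
import Mathlib

section
/- Let (W, w) and (V, v) be Bessel fusion sequences for H and Q ∈ L(𝒲, 𝒱). Then T_{V,v} Q T*_{W,w} = I_H if and only if: T*_{W,w} is injective, T_{V,v} Q is surjective, and (T*_{W,w} T_{V,v} Q)² = T*_{W,w} T_{V,v} Q (i.e., the Q-mixed Gram operator is an idempotent). -/
open scoped InnerProductSpace ENNReal
open ContinuousLinearMap

noncomputable section

/-- T_V Q T_W* = I iff T_W* is injective, T_V Q is surjective, and the Q-mixed Gram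
operator T_W* T_V Q is idempotent. -/
theorem dual_fusion_frame_iff_gram_idempotent
    {H : Type*} [NormedAddCommGroup H] [InnerProductSpace ℂ H] [CompleteSpace H]
    {I : Type*} [Countable I]
    (W V : I → Submodule ℂ H) [∀ i, CompleteSpace (W i)] [∀ i, CompleteSpace (V i)]
    (w v : I → ℝ) (hw : ∀ i, 0 < w i) (hv : ∀ i, 0 < v i)
    (TW : lp (fun i => ↥(W i)) 2 →L[ℂ] H)
    (hTW : ∀ f : lp (fun i => ↥(W i)) 2,
      HasSum (fun i => (w i : ℂ) • ((f i : H))) (TW f))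
    (TV : lp (fun i => ↥(V i)) 2 →L[ℂ] H)
    (hTV : ∀ f : lp (fun i => ↥(V i)) 2,
      HasSum (fun i => (v i : ℂ) • ((f i : H))) (TV f))
    (Q : lp (fun i => ↥(W i)) 2 →L[ℂ] lp (fun i => ↥(V i)) 2) :
    TV.comp (Q.comp (ContinuousLinearMap.adjoint TW)) = ContinuousLinearMap.id ℂ H ↔
    (Function.Injective (ContinuousLinearMap.adjoint TW) ∧
     Function.Surjective (TV.comp Q) ∧
     ((ContinuousLinearMap.adjoint TW).comp (TV.comp Q)).comp
        ((ContinuousLinearMap.adjoint TW).comp (TV.comp Q)) =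
      (ContinuousLinearMap.adjoint TW).comp (TV.comp Q)) := by
  set B := ContinuousLinearMap.adjoint TW with hB
  set A := TV.comp Q with hA
  constructor
  · intro h
    have h' : ∀ x, A (B x) = x := fun x => by
      have := ContinuousLinearMap.ext_iff.mp h x
      simpa [ContinuousLinearMap.comp_apply, hA] using this
    refine ⟨fun a b hab => ?_, fun y => ⟨B y, h' y⟩, ?_⟩
    · have : A (B a) = A (B b) := congrArg A hab
      rwa [h', h'] at this
    · ext y
      simp only [ContinuousLinearMap.comp_apply]
      rw [h']
  · rintro ⟨hinj, hsurj, hid⟩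
    ext x
    obtain ⟨y, hy⟩ := hsurj x
    have h1 : B (A (B (A y))) = B (A y) := by
      have := ContinuousLinearMap.ext_iff.mp hid y
      simpa [ContinuousLinearMap.comp_apply] using this
    have h2 : A (B (A y)) = A y := hinj h1
    simp only [ContinuousLinearMap.comp_apply, ContinuousLinearMap.id_apply]
    calc TV (Q (B x)) = A (B (A y)) := by rw [hy]; rfl
    _ = x := by rw [h2, hy]
end
end

section
/- Let (W, w) be a fusion frame for H. If (V, v) is a component preserving Q-dual fusion frame of (W, w) (i.e., Q ∈ L(𝒲, 𝒱), T_{V,v} Q T*_{W,w} = I_H, and Q p_i 𝒲 = p_i 𝒱 for all i), then for each i ∈ I, V_i = A p_i 𝒲 where A = T_{V,v} Q is a bounded left inverse of T*_{W,w}. -/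
open scoped InnerProductSpace ENNReal
open ContinuousLinearMap

set_option synthInstance.maxHeartbeats 1000000
set_option maxHeartbeats 1000000

noncomputable section

/-- (W, w) is a fusion frame for H. -/
def IsFusionFrame {H : Type*} [NormedAddCommGroup H] [InnerProductSpace ℂ H]
    [CompleteSpace H] {I : Type*}
    (W : I → Submodule ℂ H) [∀ i, CompleteSpace (W i)] (w : I → ℝ) : Prop :=
  ∃ α β : ℝ, 0 < α ∧ α ≤ β ∧ ∀ f : H,
    Summable (fun i => (w i) ^ 2 * ‖(Submodule.orthogonalProjectionOnto (W i) f : H)‖ ^ 2) ∧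
    α * ‖f‖ ^ 2 ≤ ∑' i, (w i) ^ 2 * ‖(Submodule.orthogonalProjectionOnto (W i) f : H)‖ ^ 2 ∧
    ∑' i, (w i) ^ 2 * ‖(Submodule.orthogonalProjectionOnto (W i) f : H)‖ ^ 2 ≤ β * ‖f‖ ^ 2

/-- If (V,v) is a component preserving Q-dual fusion frame of (W,w), then each V_i is the
image A p_i 𝒲 where A = T_V Q is a bounded left inverse of T_W*. -/
theorem component_preserving_dual_gives_left_inverse
    {H : Type*} [NormedAddCommGroup H] [InnerProductSpace ℂ H] [CompleteSpace H]
    {I : Type*} [Countable I] [DecidableEq I]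
    (W V : I → Submodule ℂ H) [∀ i, CompleteSpace (W i)] [∀ i, CompleteSpace (V i)]
    (w v : I → ℝ) (hw : ∀ i, 0 < w i) (hv : ∀ i, 0 < v i)
    (hFFW : IsFusionFrame W w) (hFFV : IsFusionFrame V v)
    (TW : lp (fun i => ↥(W i)) 2 →L[ℂ] H)
    (hTW : ∀ f : lp (fun i => ↥(W i)) 2,
      HasSum (fun i => (w i : ℂ) • ((f i : H))) (TW f))
    (TV : lp (fun i => ↥(V i)) 2 →L[ℂ] H)
    (hTV : ∀ f : lp (fun i => ↥(V i)) 2,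
      HasSum (fun i => (v i : ℂ) • ((f i : H))) (TV f))
    (Q : lp (fun i => ↥(W i)) 2 →L[ℂ] lp (fun i => ↥(V i)) 2)
    (hdual : TV.comp (Q.comp (ContinuousLinearMap.adjoint TW)) = ContinuousLinearMap.id ℂ H)
    (hcp : ∀ i, Q '' (Set.range fun g : ↥(W i) => lp.single 2 i g) =
      Set.range fun h : ↥(V i) => lp.single 2 i h) :
    (TV.comp Q).comp (ContinuousLinearMap.adjoint TW) = ContinuousLinearMap.id ℂ H ∧
    ∀ i, (V i : Set H) = Set.range fun g : ↥(W i) => (TV.comp Q) (lp.single 2 i g) := by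
  have hTVsingle : ∀ i (h : ↥(V i)), TV (lp.single 2 i h) = (v i : ℂ) • (h : H) := by
    intro i h
    have h1 := hTV (lp.single 2 i h)
    have h2 : HasSum (fun j => (v j : ℂ) • ((lp.single (E := fun j => ↥(V j)) 2 i h j : H))) ((v i : ℂ) • (h : H)) := by
      have := hasSum_single (f := fun j => (v j : ℂ) • ((lp.single (E := fun j => ↥(V j)) 2 i h j : H))) i
        (fun j hj => by simp [lp.single_apply_ne (E := fun j => ↥(V j)) 2 i h hj, Pi.single_eq_of_ne hj])
      simpa [lp.single_apply_self] using this
    exact h1.unique h2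
  constructor
  · rw [ContinuousLinearMap.comp_assoc]; exact hdual
  · intro i
    have key : (Set.range fun g : ↥(W i) => (TV.comp Q) (lp.single 2 i g)) =
        Set.range fun h : ↥(V i) => TV (lp.single 2 i h) := by
      have h1 : (Set.range fun g : ↥(W i) => (TV.comp Q) (lp.single 2 i g)) =
          TV '' (Q '' (Set.range fun g : ↥(W i) => lp.single 2 i g)) := by
        ext y
        constructor
        · rintro ⟨g, rfl⟩
          exact ⟨Q (lp.single 2 i g), ⟨lp.single 2 i g, ⟨g, rfl⟩, rfl⟩, rfl⟩
        · rintro ⟨-, ⟨-, ⟨g, rfl⟩, rfl⟩, rfl⟩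
          exact ⟨g, rfl⟩
      rw [h1, hcp i]
      ext y
      constructor
      · rintro ⟨-, ⟨h, rfl⟩, rfl⟩
        exact ⟨h, rfl⟩
      · rintro ⟨h, rfl⟩
        exact ⟨lp.single 2 i h, ⟨h, rfl⟩, rfl⟩
    rw [key]
    ext x
    simp only [Set.mem_range, hTVsingle]
    constructor
    · rintro hx
      refine ⟨(v i : ℂ)⁻¹ • ⟨x, hx⟩, ?_⟩
      have hvne : (v i : ℂ) ≠ 0 := by
        simpa using (ne_of_gt (hv i))
      simp [smul_smul, mul_inv_cancel₀ hvne]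
    · rintro ⟨h, rfl⟩
      exact Submodule.smul_mem _ _ h.2
end
end

section
/- Let (W, w) be a fusion frame for H. A bounded operator A: 𝒲 → H satisfies A T*_{W,w} = I_H if and only if A = S_{W,w}^{-1} T_{W,w} + R (I_𝒲 − T*_{W,w} S_{W,w}^{-1} T_{W,w}) for some bounded operator R: 𝒲 → H. -/
open scoped InnerProductSpace ENNReal
open ContinuousLinearMap

set_option synthInstance.maxHeartbeats 1000000
set_option maxHeartbeats 1000000

noncomputable section

/-- Characterization of the bounded left inverses of the analysis operator:
A T_W* = I iff A = S⁻¹T_W + R(I - T_W* S⁻¹ T_W) for some bounded R. -/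
theorem left_inverses_of_analysis_operator
    {H : Type*} [NormedAddCommGroup H] [InnerProductSpace ℂ H] [CompleteSpace H]
    {I : Type*} [Countable I]
    (W : I → Submodule ℂ H) [∀ i, CompleteSpace (W i)]
    (w : I → ℝ) (hw : ∀ i, 0 < w i)
    (hFFW : IsFusionFrame W w)
    (TW : lp (fun i => ↥(W i)) 2 →L[ℂ] H)
    (hTW : ∀ f : lp (fun i => ↥(W i)) 2,
      HasSum (fun i => (w i : ℂ) • ((f i : H))) (TW f))
    (Sinv : H →L[ℂ] H)
    (hS1 : (TW.comp (ContinuousLinearMap.adjoint TW)).comp Sinv = ContinuousLinearMap.id ℂ H)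
    (hS2 : Sinv.comp (TW.comp (ContinuousLinearMap.adjoint TW)) = ContinuousLinearMap.id ℂ H)
    (A : lp (fun i => ↥(W i)) 2 →L[ℂ] H) :
    A.comp (ContinuousLinearMap.adjoint TW) = ContinuousLinearMap.id ℂ H ↔
    ∃ R : lp (fun i => ↥(W i)) 2 →L[ℂ] H,
      A = Sinv.comp TW + R.comp (ContinuousLinearMap.id ℂ _ -
        (ContinuousLinearMap.adjoint TW).comp (Sinv.comp TW)) := by
  have hS2' : ∀ x, Sinv (TW ((ContinuousLinearMap.adjoint TW) x)) = x := fun x =>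
    congrArg (fun f => f x) hS2
  constructor
  · intro hA
    have hA' : ∀ x, A ((ContinuousLinearMap.adjoint TW) x) = x := fun x =>
      congrArg (fun f => f x) hA
    refine ⟨A, ?_⟩
    ext f
    simp [comp_apply, map_sub, hA', hS2']
  · rintro ⟨R, rfl⟩
    ext x
    simp [comp_apply, map_sub, hS2']
end
end

section
/- Let {e_n}_{n∈ℕ} be an orthonormal basis of H, W_1 = closure of span{e_k : k ≥ 2} and W_k = span{e_1, e_k} for k ≥ 2, and let w = {w_k} be positive weights. If (W, w) is a Bessel fusion sequence for H, then w ∈ ℓ²(ℕ). -/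
open scoped InnerProductSpace ENNReal

set_option synthInstance.maxHeartbeats 1000000
set_option maxHeartbeats 1000000

noncomputable section

/-- For W_0 = closure span{e_k : k ≥ 1} and W_k = span{e_0, e_k} (k ≥ 1), if (W,w) is a
Bessel fusion sequence then the weights are square-summable. -/
theorem bessel_fusion_implies_weights_l2
    {H : Type*} [NormedAddCommGroup H] [InnerProductSpace ℂ H] [CompleteSpace H]
    (e : ℕ → H) (he : Orthonormal ℂ e)
    (htotal : (Submodule.span ℂ (Set.range e)).topologicalClosure = ⊤)
    (W : ℕ → Submodule ℂ H) [∀ k, CompleteSpace (W k)]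
    (hW0 : W 0 = (Submodule.span ℂ (e '' {k | 1 ≤ k})).topologicalClosure)
    (hWk : ∀ k, 1 ≤ k → W k = Submodule.span ℂ {e 0, e k})
    (w : ℕ → ℝ) (hw : ∀ k, 0 < w k)
    (β : ℝ) (hβ : 0 < β)
    (hBessel : ∀ f : H,
      Summable (fun k => (w k) ^ 2 * ‖(Submodule.orthogonalProjectionOnto (W k) f : H)‖ ^ 2) ∧
      ∑' k, (w k) ^ 2 * ‖(Submodule.orthogonalProjectionOnto (W k) f : H)‖ ^ 2 ≤ β * ‖f‖ ^ 2) :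
    Summable (fun k => (w k) ^ 2) := by
  have hS := (hBessel (e 0)).1
  have hmem : ∀ k, 1 ≤ k → e 0 ∈ W k := by
    intro k hk
    rw [hWk k hk]
    exact Submodule.subset_span (Set.mem_insert _ _)
  have hproj : ∀ k, 1 ≤ k →
      (w k) ^ 2 * ‖(Submodule.orthogonalProjectionOnto (W k) (e 0) : H)‖ ^ 2 = (w k) ^ 2 := by
    intro k hk
    rw [Submodule.coe_orthogonalProjectionOnto_apply, Submodule.starProjection_eq_self_iff.mpr (hmem k hk), he.1 0]
    ring
  have hS1 : Summable (fun k =>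
      (w (k + 1)) ^ 2 * ‖(Submodule.orthogonalProjectionOnto (W (k + 1)) (e 0) : H)‖ ^ 2) :=
    (summable_nat_add_iff 1).mpr hS
  have hS2 : Summable (fun k => (w (k + 1)) ^ 2) := by
    refine hS1.congr ?_
    intro k
    exact hproj (k + 1) (Nat.le_add_left 1 k)
  exact (summable_nat_add_iff 1).mp hS2
end
end
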